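/- arXiv:1405.4120 — 2 statements merged into one kernel-verified Lean document; each statement's English description precedes it below -/
import Mathlib

section
/- Let α ≥ 2 be a real number, R > 0, K > 0, define Q x y = (x − y)^α + y^(α−1) · x, q x = ⨅_{y ∈ [0,x]} Q x y, and c_α = ⨅_{s ∈ [0,1]} ((1 − s)^α + s^(α−1)). Then the minimal total energy of the dense network satisfies E_min = K · ∫_{x ∈ [0,R]} q x dx = K · c_α · R^(α+1) / (α + 1). -/
open MeasureTheory

/-- The minimal total energy of the dense network:
`E_min = K · ∫_{[0,R]} q x dx = K · c_α · R^(α+1) / (α+1)`, where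
`q x = ⨅_{y ∈ [0,x]} ((x - y)^α + y^(α-1) x)` and
`c_α = ⨅_{s ∈ [0,1]} ((1 - s)^α + s^(α-1))`. -/
theorem minimal_total_energy_value
    (α : ℝ) (hα : 2 ≤ α) (R K : ℝ) (hR : 0 < R) (hK : 0 < K)
    (Q : ℝ → ℝ → ℝ)
    (hQ : ∀ x y : ℝ, Q x y = (x - y) ^ α + y ^ (α - 1) * x)
    (q : ℝ → ℝ) (hq : ∀ x : ℝ, q x = ⨅ y : Set.Icc (0 : ℝ) x, Q x y)
    (c : ℝ)
    (hc : c = ⨅ s : Set.Icc (0 : ℝ) 1, ((1 - (s : ℝ)) ^ α + (s : ℝ) ^ (α - 1))) :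
    K * ∫ x in Set.Icc (0 : ℝ) R, q x = K * c * R ^ (α + 1) / (α + 1) := by
  have hα0 : α ≠ 0 := by linarith
  set f : ℝ → ℝ := fun s => (1 - s) ^ α + s ^ (α - 1) with hf
  have hfnn : ∀ s : Set.Icc (0 : ℝ) 1, 0 ≤ f s := by
    rintro ⟨s, hs0, hs1⟩
    exact add_nonneg (Real.rpow_nonneg (by linarith) _) (Real.rpow_nonneg hs0 _)
  have hbddf : BddBelow (Set.range fun s : Set.Icc (0 : ℝ) 1 => f s) := by
    refine ⟨0, ?_⟩; rintro _ ⟨s, rfl⟩; exact hfnn s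
  have hcnn : 0 ≤ c := by
    rw [hc]; exact le_ciInf hfnn
  -- key pointwise formula
  have key : ∀ x : ℝ, 0 ≤ x → q x = c * x ^ α := by
    intro x hx
    rcases eq_or_lt_of_le hx with h | hxpos
    · subst h
      rw [hq]
      have : ∀ y : Set.Icc (0 : ℝ) 0, Q 0 (y : ℝ) = 0 := by
        rintro ⟨y, hy0, hy1⟩
        have hy : y = 0 := le_antisymm hy1 hy0
        simp [hQ, hy, Real.zero_rpow hα0]
      simp only [this]
      rw [ciInf_const, Real.zero_rpow hα0, mul_zero]
    · have hxne : x ≠ 0 := ne_of_gt hxpos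
      have hxa : (0:ℝ) < x ^ α := Real.rpow_pos_of_pos hxpos α
      -- Q x (s*x) = x^α * f s for s ∈ [0,1]
      have hQs : ∀ s : ℝ, 0 ≤ s → s ≤ 1 → Q x (s * x) = x ^ α * f s := by
        intro s hs0 hs1
        rw [hQ]
        have h1 : x - s * x = (1 - s) * x := by ring
        have h2 : (s * x) ^ (α - 1) = s ^ (α - 1) * x ^ (α - 1) :=
          Real.mul_rpow hs0 hx
        rw [h1, Real.mul_rpow (by linarith) hx, h2]
        have h3 : x ^ (α - 1) * x = x ^ α := by
          rw [← Real.rpow_add_one hxne (α - 1)]; ring_nf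
        calc (1 - s) ^ α * x ^ α + s ^ (α - 1) * x ^ (α - 1) * x
            = (1 - s) ^ α * x ^ α + s ^ (α - 1) * (x ^ (α - 1) * x) := by ring
          _ = x ^ α * ((1 - s) ^ α + s ^ (α - 1)) := by rw [h3]; ring
      have hne : Nonempty (Set.Icc (0 : ℝ) x) := ⟨⟨0, le_refl _, hx⟩⟩
      have hbddQ : BddBelow (Set.range fun y : Set.Icc (0 : ℝ) x => Q x (y : ℝ)) := by
        refine ⟨0, ?_⟩
        rintro _ ⟨⟨y, hy0, hyx⟩, rfl⟩
        dsimp only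
        rw [hQ]
        exact add_nonneg (Real.rpow_nonneg (by linarith) _)
          (mul_nonneg (Real.rpow_nonneg hy0 _) hx)
      rw [hq]
      apply le_antisymm
      · -- ⨅ Q ≤ c * x^α
        have : c * x ^ α = ⨅ s : Set.Icc (0 : ℝ) 1, x ^ α * f s := by
          rw [hc, ← Real.mul_iInf_of_nonneg hxa.le]; ring
        rw [this]
        refine le_ciInf fun s => ?_
        have hm : (s : ℝ) * x ∈ Set.Icc (0 : ℝ) x := by
          constructor
          · exact mul_nonneg s.2.1 hx
          · nlinarith [s.2.1, s.2.2]
        calc (⨅ y : Set.Icc (0 : ℝ) x, Q x (y : ℝ)) ≤ Q x ((s : ℝ) * x) :=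
              ciInf_le hbddQ ⟨(s : ℝ) * x, hm⟩
          _ = x ^ α * f s := hQs s s.2.1 s.2.2
      · -- c * x^α ≤ ⨅ Q
        refine le_ciInf fun y => ?_
        have hs0 : 0 ≤ (y : ℝ) / x := div_nonneg y.2.1 hx
        have hs1 : (y : ℝ) / x ≤ 1 := (div_le_one hxpos).mpr y.2.2
        have hyx : ((y : ℝ) / x) * x = (y : ℝ) := div_mul_cancel₀ _ hxne
        have hQy : Q x (y : ℝ) = x ^ α * f ((y : ℝ) / x) := by
          conv_lhs => rw [← hyx]
          rw [hQs _ hs0 hs1]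
        rw [hQy]
        have hcle : c ≤ f ((y : ℝ) / x) := by
          rw [hc]; exact ciInf_le hbddf ⟨(y : ℝ) / x, hs0, hs1⟩
        calc c * x ^ α = x ^ α * c := by ring
          _ ≤ x ^ α * f ((y : ℝ) / x) := by
              exact mul_le_mul_of_nonneg_left hcle hxa.le
  have hint : ∫ x in Set.Icc (0:ℝ) R, q x = c * (R ^ (α+1) / (α+1)) := by
    rw [setIntegral_congr_fun measurableSet_Icc (fun x hx => key x hx.1)]
    rw [MeasureTheory.integral_const_mul]
    congr 1
    rw [MeasureTheory.integral_Icc_eq_integral_Ioc,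
      ← intervalIntegral.integral_of_le hR.le,
      integral_rpow (Or.inl (by linarith))]
    rw [Real.zero_rpow (by intro h; linarith : α + 1 ≠ 0)]
    ring
  rw [hint]; ring
end

section
/- Let α ≥ 2 be a real number, R > 0, K > 0, define Q x y = (x − y)^α + y^(α−1) · x and q x = ⨅_{y ∈ [0,x]} Q x y. Then K · ∫_{x ∈ [0,R]} q x dx < K · ∫_{x ∈ [0,R]} x^α dx = K · R^(α+1)/(α+1); that is, the minimal total energy under optimal cooperation (the MINIMAL strategy) is strictly smaller than the total energy when every node transmits directly to the central node (the DEF strategy). -/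
open MeasureTheory

/-- The minimal total energy under optimal cooperation (MINIMAL strategy) is
strictly smaller than the total energy under direct transmission by all nodes
(DEF strategy): `K · ∫₀^R q x dx < K · ∫₀^R x^α dx = K · R^(α+1)/(α+1)`. -/
theorem minimal_strategy_beats_def_strategy
    (α : ℝ) (hα : 2 ≤ α) (R K : ℝ) (hR : 0 < R) (hK : 0 < K)
    (Q : ℝ → ℝ → ℝ)
    (hQ : ∀ x y : ℝ, Q x y = (x - y) ^ α + y ^ (α - 1) * x)
    (q : ℝ → ℝ) (hq : ∀ x : ℝ, q x = ⨅ y : Set.Icc (0 : ℝ) x, Q x y) :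
    K * ∫ x in Set.Icc (0 : ℝ) R, q x <
        K * ∫ x in Set.Icc (0 : ℝ) R, x ^ α ∧
      K * ∫ x in Set.Icc (0 : ℝ) R, x ^ α = K * (R ^ (α + 1) / (α + 1)) := by
  have hαpos : (0:ℝ) < α := by linarith
  have hα1 : (0:ℝ) < α - 1 := by linarith
  -- Q is nonnegative on the relevant domain
  have hQnonneg : ∀ x : ℝ, ∀ y : Set.Icc (0:ℝ) x, 0 ≤ Q x y := by
    rintro x ⟨y, hy0, hyx⟩
    rw [hQ]
    exact add_nonneg (Real.rpow_nonneg (by linarith) _)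
      (mul_nonneg (Real.rpow_nonneg hy0 _) (le_trans hy0 hyx))
  have hbdd : ∀ x : ℝ, BddBelow (Set.range fun y : Set.Icc (0:ℝ) x => Q x y) := by
    intro x
    exact ⟨0, by rintro _ ⟨y, rfl⟩; exact hQnonneg x y⟩
  have hq_nonneg : ∀ x : ℝ, 0 ≤ q x := by
    intro x
    rw [hq]
    exact Real.iInf_nonneg (hQnonneg x)
  have hq_le : ∀ x : ℝ, ∀ y ∈ Set.Icc (0:ℝ) x, q x ≤ Q x y := by
    intro x y hy
    rw [hq]
    exact ciInf_le (hbdd x) ⟨y, hy⟩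
  -- q x ≤ x ^ α for 0 ≤ x
  have hq_le_pow : ∀ x : ℝ, 0 ≤ x → q x ≤ x ^ α := by
    intro x hx
    have h0 := hq_le x 0 ⟨le_refl 0, hx⟩
    rw [hQ, sub_zero, Real.zero_rpow (by linarith), zero_mul, add_zero] at h0
    exact h0
  -- q is monotone
  have hq_mono : Monotone q := by
    intro x₁ x₂ hx
    rcases lt_or_ge x₁ 0 with h1 | h1
    · have : IsEmpty (Set.Icc (0:ℝ) x₁) := by
        rw [Set.isEmpty_coe_sort, Set.Icc_eq_empty_iff]
        intro h; linarith
      rw [hq x₁, Real.iInf_of_isEmpty]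
      exact hq_nonneg x₂
    · rw [hq x₂]
      have hne : Nonempty (Set.Icc (0:ℝ) x₂) := ⟨⟨0, le_refl 0, le_trans h1 hx⟩⟩
      apply le_ciInf
      rintro ⟨y, hy0, hyx2⟩
      rcases le_or_gt y x₁ with h2 | h2
      · calc q x₁ ≤ Q x₁ y := hq_le x₁ y ⟨hy0, h2⟩
          _ ≤ Q x₂ y := by
            rw [hQ, hQ]
            exact add_le_add (Real.rpow_le_rpow (by linarith) (by linarith) hαpos.le)
              (mul_le_mul_of_nonneg_left hx (Real.rpow_nonneg hy0 _))
      · calc q x₁ ≤ x₁ ^ α := hq_le_pow x₁ h1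
          _ = x₁ ^ (α - 1) * x₁ := by
            rcases eq_or_lt_of_le h1 with h | h
            · rw [← h, Real.zero_rpow (by linarith), Real.zero_rpow (by linarith),
                zero_mul]
            · rw [← Real.rpow_add_one (ne_of_gt h)]
              ring_nf
          _ ≤ y ^ (α - 1) * x₂ :=
            mul_le_mul (Real.rpow_le_rpow h1 h2.le hα1.le) hx h1
              (Real.rpow_nonneg hy0 _)
          _ ≤ Q x₂ y := by
            rw [hQ]
            exact le_add_of_nonneg_left (Real.rpow_nonneg (by linarith) _)
  -- key bound: q x ≤ 3/4 * x^α on [0, R]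
  have hq34 : ∀ x ∈ Set.Icc (0:ℝ) R, q x ≤ 3/4 * x ^ α := by
    rintro x ⟨hx0, _⟩
    rcases eq_or_lt_of_le hx0 with h | h
    · rw [← h, Real.zero_rpow (ne_of_gt hαpos), mul_zero]
      have h0 := hq_le_pow 0 le_rfl
      rwa [Real.zero_rpow (ne_of_gt hαpos)] at h0
    · have hx2 : 0 < x / 2 := by linarith
      have hmem : x / 2 ∈ Set.Icc (0:ℝ) x := ⟨hx2.le, by linarith⟩
      have h1 := hq_le x (x/2) hmem
      rw [hQ] at h1
      have hxx : x - x / 2 = x / 2 := by ring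
      have hsplit : (x/2) ^ (α - 1) * x = 2 * (x/2) ^ α := by
        have hh : (x/2) ^ (α-1) * (x/2) = (x/2) ^ α := by
          rw [← Real.rpow_add_one (ne_of_gt hx2)]; ring_nf
        calc (x/2) ^ (α-1) * x = ((x/2) ^ (α-1) * (x/2)) * 2 := by ring
          _ = 2 * (x/2) ^ α := by rw [hh]; ring
      rw [hxx, hsplit] at h1
      have hdiv : (x/2) ^ α = x ^ α / 2 ^ α := Real.div_rpow hx0 (by norm_num) α
      have h2α : (4:ℝ) ≤ 2 ^ α := by
        have := Real.rpow_le_rpow_of_exponent_le (by norm_num : (1:ℝ) ≤ 2) hα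
        rwa [show ((2:ℝ) ^ (2:ℝ)) = 4 by
          rw [show (2:ℝ) = ((2:ℕ):ℝ) by norm_num, Real.rpow_natCast]; norm_num] at this
      have hxα : 0 ≤ x ^ α := Real.rpow_nonneg hx0 _
      have h3 : (x/2) ^ α + 2 * (x/2) ^ α = 3 * (x ^ α / 2 ^ α) := by
        rw [hdiv]; ring
      rw [h3] at h1
      calc q x ≤ 3 * (x ^ α / 2 ^ α) := h1
        _ ≤ 3 * (x ^ α / 4) := by
          gcongr
        _ = 3/4 * x ^ α := by ring
  -- integral of x^α over Icc 0 R
  have hIval : ∫ x in Set.Icc (0:ℝ) R, x ^ α = R ^ (α + 1) / (α + 1) := by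
    rw [MeasureTheory.integral_Icc_eq_integral_Ioc,
      ← intervalIntegral.integral_of_le hR.le,
      integral_rpow (Or.inl (by linarith)),
      Real.zero_rpow (by linarith)]
    ring
  have hIpos : 0 < R ^ (α + 1) / (α + 1) := by
    apply div_pos (Real.rpow_pos_of_pos hR _) (by linarith)
  -- integrability
  have hintpow : IntegrableOn (fun x : ℝ => x ^ α) (Set.Icc 0 R) :=
    (Real.continuous_rpow_const hαpos.le).continuousOn.integrableOn_Icc
  have hintq : IntegrableOn q (Set.Icc 0 R) :=
    MonotoneOn.integrableOn_isCompact isCompact_Icc (hq_mono.monotoneOn _)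
  -- comparing the integrals
  have hle : ∫ x in Set.Icc (0:ℝ) R, q x ≤ ∫ x in Set.Icc (0:ℝ) R, 3/4 * x ^ α :=
    setIntegral_mono_on hintq (hintpow.const_mul _) measurableSet_Icc hq34
  rw [integral_const_mul] at hle
  constructor
  · apply mul_lt_mul_of_pos_left _ hK
    calc ∫ x in Set.Icc (0:ℝ) R, q x ≤ 3/4 * ∫ x in Set.Icc (0:ℝ) R, x ^ α := hle
      _ < ∫ x in Set.Icc (0:ℝ) R, x ^ α := by
        rw [hIval]; linarith
  · rw [hIval]
end
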